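/- arXiv:2504.21068 — 5 statements merged into one kernel-verified Lean document; each statement's English description precedes it below -/
import Mathlib

section
/- Let (G,C) be a weighted DAG and M a set of vertices, and suppose the edge i→k exists in the critical DAG D*(C,M). If some critical path π from i to k in (G,C) contains an internal node j (distinct from i and k), then both edges i→j and j→k exist in D*(C,M). -/
/-!  Common definitions: weighted DAGs, paths, critical paths,
critical DAGs and C*-separation, following Boege–Ferry–Hollering–Nowell,
"Polyhedral aspects of maxoids". -/

variable {V : Type*}

/-- `p` is a directed path (vertex list) from `i` to `j` in the digraph `E`. -/
def IsPath (E : V → V → Prop) (i j : V) (p : List V) : Prop :=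
  p.head? = some i ∧ p.getLast? = some j ∧ List.Chain' E p

/-- The weight of a path: the sum of the edge weights along consecutive vertices. -/
def pathWeight (c : V → V → ℝ) (p : List V) : ℝ :=
  ((p.zip p.tail).map fun q => c q.1 q.2).sum

/-- `p` is a critical (maximum-weight) path from `i` to `j`. -/
def IsCritical (E : V → V → Prop) (c : V → V → ℝ) (i j : V) (p : List V) : Prop :=
  IsPath E i j p ∧ ∀ q, IsPath E i j q → pathWeight c q ≤ pathWeight c p

/-- The internal vertices of a path (all but the two endpoints). -/
def internalVerts (p : List V) : List V := p.tail.dropLast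

/-- Edge `i → j` of the critical DAG `D*(C,L)`: there is a directed `i`–`j`
path in `G` and no critical `i`–`j` path has an internal vertex in `L`. -/
def critEdge (E : V → V → Prop) (c : V → V → ℝ) (L : Set V) (i j : V) : Prop :=
  (∃ p, IsPath E i j p) ∧
    ∀ p, IsCritical E c i j p → ∀ v ∈ internalVerts p, v ∉ L

/-- `i` and `j` are C*-connected given `L`: some path of one of the five
permitted shapes joins them in the critical DAG `D*(C,L)` (colliders must lie
in `L`, non-colliders outside `L`, at most one collider). -/
def starConn (E : V → V → Prop) (c : V → V → ℝ) (L : Set V) (i j : V) : Prop :=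
  let D := critEdge E c L
  D i j ∨ D j i ∨
  (∃ p, p ∉ L ∧ D p i ∧ D p j) ∨
  (∃ l, l ∈ L ∧ D i l ∧ D j l) ∨
  (∃ p l, p ∉ L ∧ l ∈ L ∧ D p i ∧ D p l ∧ D j l) ∨
  (∃ p l, p ∉ L ∧ l ∈ L ∧ D p j ∧ D p l ∧ D i l) ∨
  (∃ p q l, p ∉ L ∧ q ∉ L ∧ l ∈ L ∧ D p i ∧ D p l ∧ D q l ∧ D q j)

/-- C*-separation of two vertices given `L`. -/
def CSep (E : V → V → Prop) (c : V → V → ℝ) (L : Set V) (i j : V) : Prop :=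
  ¬ starConn E c L i j

/-- C*-connection of two sets of vertices given `L`. -/
def starConnSets (E : V → V → Prop) (c : V → V → ℝ) (L I J : Set V) : Prop :=
  ∃ i ∈ I, ∃ j ∈ J, starConn E c L i j

/-- C*-separation of two sets of vertices given `L`. -/
def CSepSets (E : V → V → Prop) (c : V → V → ℝ) (L I J : Set V) : Prop :=
  ¬ starConnSets E c L I J

/-- The digraph `E` is acyclic. -/
def IsAcyclic (E : V → V → Prop) : Prop := ∀ v, ¬ Relation.TransGen E v v

/-- A weight matrix is generic: between any two vertices the maximum-weight
path is unique whenever one exists. -/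
def Generic (E : V → V → Prop) (c : V → V → ℝ) : Prop :=
  ∀ i j p q, IsCritical E c i j p → IsCritical E c i j q → p = q

/-- The set of generic weight matrices inducing exactly the same critical
paths as `c`. -/
def sameCritSet (E : V → V → Prop) (c : V → V → ℝ) : Set (V → V → ℝ) :=
  {c' | Generic E c' ∧ ∀ i j p, IsCritical E c' i j p ↔ IsCritical E c i j p}

/-!
Write the critical path as `p = a ++ j :: b`. Its weight is the weight of `a ++ [j]` plus that of
`j :: b`, so replacing `a ++ [j]` by a critical `i`–`j` path `q` gives an `i`–`k` path at least as
heavy as `p`, hence critical. Its internal vertices contain those of `q`, and they avoid `M`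
because `i → k` lies in `D*(C,M)`. The edge `j → k` is handled symmetrically.
-/

lemma mem_of_mem_internalVerts {p : List V} {v : V} (hv : v ∈ internalVerts p) : v ∈ p :=
  List.mem_of_mem_tail (List.mem_of_mem_dropLast hv)

lemma internalVerts_append_singleton_subset (a b : List V) (j : V) :
    internalVerts (a ++ [j]) ⊆ internalVerts (a ++ j :: b) := by
  cases a with
  | nil => simp [internalVerts]
  | cons x a => simp [internalVerts]

lemma internalVerts_cons_subset (a b : List V) (j : V) :
    internalVerts (j :: b) ⊆ internalVerts (a ++ j :: b) := by
  cases a with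
  | nil => simp
  | cons x a =>
    cases b with
    | nil => simp [internalVerts]
    | cons y b => simp [internalVerts]

lemma pathWeight_append_cons (c : V → V → ℝ) (a b : List V) (j : V) :
    pathWeight c (a ++ j :: b) = pathWeight c (a ++ [j]) + pathWeight c (j :: b) := by
  induction a with
  | nil => simp [pathWeight]
  | cons x a ih =>
    cases a with
    | nil => simp [pathWeight]
    | cons y a =>
      simp only [pathWeight, List.cons_append, List.tail_cons, List.zip_cons_cons,
        List.map_cons, List.sum_cons] at ih ⊢
      rw [ih]
      ring

section
variable {E : V → V → Prop} {i j k : V}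

lemma IsPath.exists_eq_append_singleton {q : List V} (hq : IsPath E i j q) :
    ∃ a, q = a ++ [j] :=
  List.getLast?_eq_some_iff.1 hq.2.1

lemma IsPath.exists_eq_cons {q : List V} (hq : IsPath E i j q) : ∃ b, q = i :: b :=
  List.head?_eq_some_iff.1 hq.1

lemma IsPath.of_append_cons {a b : List V} (h : IsPath E i k (a ++ j :: b)) :
    IsPath E i j (a ++ [j]) ∧ IsPath E j k (j :: b) := by
  obtain ⟨hi, hk, hchain⟩ := h
  refine ⟨⟨?_, by simp, hchain.prefix ⟨b, by simp⟩⟩, ⟨rfl, ?_, hchain.suffix ⟨a, rfl⟩⟩⟩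
  · cases a <;> simp_all
  · simpa [List.getLast?_append] using hk

lemma IsPath.append_cons {a b : List V} (ha : IsPath E i j (a ++ [j]))
    (hb : IsPath E j k (j :: b)) : IsPath E i k (a ++ j :: b) := by
  obtain ⟨hi, -, hchain_a⟩ := ha
  obtain ⟨-, hk, hchain_b⟩ := hb
  refine ⟨?_, by simpa [List.getLast?_append] using hk, ?_⟩
  · cases a <;> simp_all
  · have hchain : List.IsChain E (a ++ j :: b) := by
      simpa using hchain_a.append_overlap (l₃ := b) hchain_b (List.cons_ne_nil j [])
    exact hchain

lemma IsCritical.append_cons_of_le {c : V → V → ℝ} {a b a' b' : List V}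
    (hp : IsCritical E c i k (a ++ j :: b))
    (ha' : IsPath E i j (a' ++ [j])) (hb' : IsPath E j k (j :: b'))
    (hwa : pathWeight c (a ++ [j]) ≤ pathWeight c (a' ++ [j]))
    (hwb : pathWeight c (j :: b) ≤ pathWeight c (j :: b')) :
    IsCritical E c i k (a' ++ j :: b') :=
  ⟨ha'.append_cons hb', fun q hq => calc
    pathWeight c q ≤ pathWeight c (a ++ j :: b) := hp.2 q hq
    _ = pathWeight c (a ++ [j]) + pathWeight c (j :: b) := pathWeight_append_cons c a b j
    _ ≤ pathWeight c (a' ++ [j]) + pathWeight c (j :: b') := add_le_add hwa hwb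
    _ = pathWeight c (a' ++ j :: b') := (pathWeight_append_cons c a' b' j).symm⟩

end

theorem stmt3_general (E : V → V → Prop) (c : V → V → ℝ) (M : Set V) (i k j : V)
    (hik : critEdge E c M i k) (p : List V)
    (hp : IsCritical E c i k p) (hj : j ∈ internalVerts p) :
    critEdge E c M i j ∧ critEdge E c M j k := by
  obtain ⟨a, b, rfl⟩ := List.append_of_mem (mem_of_mem_internalVerts hj)
  obtain ⟨hpa, hpb⟩ := hp.1.of_append_cons
  refine ⟨⟨⟨_, hpa⟩, fun q hq v hv => ?_⟩, ⟨⟨_, hpb⟩, fun q hq v hv => ?_⟩⟩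
  · obtain ⟨a', rfl⟩ := hq.1.exists_eq_append_singleton
    exact hik.2 _ (hp.append_cons_of_le hq.1 hpb (hq.2 _ hpa) le_rfl) v
      (internalVerts_append_singleton_subset a' b j hv)
  · obtain ⟨b', rfl⟩ := hq.1.exists_eq_cons
    exact hik.2 _ (hp.append_cons_of_le hpa hq.1 le_rfl (hq.2 _ hpb)) v
      (internalVerts_cons_subset a b' j hv)

/-- if `i → k` is in `D*(C,M)` and some critical `i`–`k` path
contains an internal node `j`, then `i → j` and `j → k` are in `D*(C,M)`. -/
theorem stmt3 (E : V → V → Prop) (c : V → V → ℝ) (M : Set V) (i k j : V)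
    (hik : critEdge E c M i k) (p : List V)
    (hp : IsCritical E c i k p) (hj : j ∈ internalVerts p)
    (hji : j ≠ i) (hjk : j ≠ k) :
    critEdge E c M i j ∧ critEdge E c M j k :=
  stmt3_general E c M i k j hik p hp hj
end

section
/- Maxoids satisfy the amalgamation property for blocking sets: for any weighted DAG (G,C), distinct vertices i,j, and pairwise disjoint sets K,L,M ⊆ V∖{i,j}, if i is C*-separated from j given K∪M and i is C*-separated from j given L∪M, then i is C*-separated from j given K∪L∪M. -/
/-!  Common definitions: weighted DAGs, paths, critical paths,
critical DAGs and C*-separation, following Boege–Ferry–Hollering–Nowell,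
"Polyhedral aspects of maxoids". -/

variable {V : Type*}

/-- the amalgamation property for blocking sets. -/
theorem stmt12 (E : V → V → Prop) (c : V → V → ℝ) (i j : V) (hij : i ≠ j)
    (K L M : Set V)
    (hiK : i ∉ K) (hjK : j ∉ K) (hiL : i ∉ L) (hjL : j ∉ L)
    (hiM : i ∉ M) (hjM : j ∉ M)
    (hKL : Disjoint K L) (hKM : Disjoint K M) (hLM : Disjoint L M)
    (h1 : CSep E c (K ∪ M) i j) (h2 : CSep E c (L ∪ M) i j) :
    CSep E c (K ∪ L ∪ M) i j := by
  intro hconn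
  have mono : ∀ (S' S : Set V), S' ⊆ S → ∀ u v,
      critEdge E c S u v → critEdge E c S' u v := by
    intro S' S hsub u v h
    exact ⟨h.1, fun p hp w hw hmem => h.2 p hp w hw (hsub hmem)⟩
  have hKMs : (K ∪ M : Set V) ⊆ K ∪ L ∪ M := by
    intro x hx; rcases hx with h | h
    · exact Or.inl (Or.inl h)
    · exact Or.inr h
  have hLMs : (L ∪ M : Set V) ⊆ K ∪ L ∪ M := by
    intro x hx; rcases hx with h | h
    · exact Or.inl (Or.inr h)
    · exact Or.inr h
  have m1 := mono (K ∪ M) (K ∪ L ∪ M) hKMs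
  have m2 := mono (L ∪ M) (K ∪ L ∪ M) hLMs
  have n1 : ∀ x, x ∉ (K ∪ L ∪ M : Set V) → x ∉ (K ∪ M : Set V) :=
    fun x hx h => hx (hKMs h)
  have n2 : ∀ x, x ∉ (K ∪ L ∪ M : Set V) → x ∉ (L ∪ M : Set V) :=
    fun x hx h => hx (hLMs h)
  rcases hconn with h | h | ⟨p, hp, d1, d2⟩ | ⟨l, hl, d1, d2⟩ |
      ⟨p, l, hp, hl, d1, d2, d3⟩ | ⟨p, l, hp, hl, d1, d2, d3⟩ |
      ⟨p, q, l, hp, hq, hl, d1, d2, d3, d4⟩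
  · exact h1 (Or.inl (m1 _ _ h))
  · exact h1 (Or.inr (Or.inl (m1 _ _ h)))
  · exact h1 (Or.inr (Or.inr (Or.inl ⟨p, n1 p hp, m1 _ _ d1, m1 _ _ d2⟩)))
  · rcases hl with (hK | hL) | hM
    · exact h1 (Or.inr (Or.inr (Or.inr (Or.inl
        ⟨l, Or.inl hK, m1 _ _ d1, m1 _ _ d2⟩))))
    · exact h2 (Or.inr (Or.inr (Or.inr (Or.inl
        ⟨l, Or.inl hL, m2 _ _ d1, m2 _ _ d2⟩))))
    · exact h1 (Or.inr (Or.inr (Or.inr (Or.inl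
        ⟨l, Or.inr hM, m1 _ _ d1, m1 _ _ d2⟩))))
  · rcases hl with (hK | hL) | hM
    · exact h1 (Or.inr (Or.inr (Or.inr (Or.inr (Or.inl
        ⟨p, l, n1 p hp, Or.inl hK, m1 _ _ d1, m1 _ _ d2, m1 _ _ d3⟩)))))
    · exact h2 (Or.inr (Or.inr (Or.inr (Or.inr (Or.inl
        ⟨p, l, n2 p hp, Or.inl hL, m2 _ _ d1, m2 _ _ d2, m2 _ _ d3⟩)))))
    · exact h1 (Or.inr (Or.inr (Or.inr (Or.inr (Or.inl
        ⟨p, l, n1 p hp, Or.inr hM, m1 _ _ d1, m1 _ _ d2, m1 _ _ d3⟩)))))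
  · rcases hl with (hK | hL) | hM
    · exact h1 (Or.inr (Or.inr (Or.inr (Or.inr (Or.inr (Or.inl
        ⟨p, l, n1 p hp, Or.inl hK, m1 _ _ d1, m1 _ _ d2, m1 _ _ d3⟩))))))
    · exact h2 (Or.inr (Or.inr (Or.inr (Or.inr (Or.inr (Or.inl
        ⟨p, l, n2 p hp, Or.inl hL, m2 _ _ d1, m2 _ _ d2, m2 _ _ d3⟩))))))
    · exact h1 (Or.inr (Or.inr (Or.inr (Or.inr (Or.inr (Or.inl
        ⟨p, l, n1 p hp, Or.inr hM, m1 _ _ d1, m1 _ _ d2, m1 _ _ d3⟩))))))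
  · rcases hl with (hK | hL) | hM
    · exact h1 (Or.inr (Or.inr (Or.inr (Or.inr (Or.inr (Or.inr
        ⟨p, q, l, n1 p hp, n1 q hq, Or.inl hK,
          m1 _ _ d1, m1 _ _ d2, m1 _ _ d3, m1 _ _ d4⟩))))))
    · exact h2 (Or.inr (Or.inr (Or.inr (Or.inr (Or.inr (Or.inr
        ⟨p, q, l, n2 p hp, n2 q hq, Or.inl hL,
          m2 _ _ d1, m2 _ _ d2, m2 _ _ d3, m2 _ _ d4⟩))))))
    · exact h1 (Or.inr (Or.inr (Or.inr (Or.inr (Or.inr (Or.inr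
        ⟨p, q, l, n1 p hp, n1 q hq, Or.inr hM,
          m1 _ _ d1, m1 _ _ d2, m1 _ _ d3, m1 _ _ d4⟩))))))
end

section
/- d-separation fails the amalgamation property: in the DAG 1→2←3→4←5 (the Cassiopeia graph), vertex 1 is d-separated from vertex 5 given {2}, and d-separated from 5 given {4}, but 1 is not d-separated from 5 given {2,4}. -/
/-!  Common definitions: weighted DAGs, paths, critical paths,
critical DAGs and C*-separation, following Boege–Ferry–Hollering–Nowell,
"Polyhedral aspects of maxoids". -/

variable {V : Type*}

/-- `p` is an (undirected) trail from `i` to `j` in the digraph `E`. -/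
def IsTrail (E : V → V → Prop) (i j : V) (p : List V) : Prop :=
  p.head? = some i ∧ p.getLast? = some j ∧
    List.Chain' (fun a b => E a b ∨ E b a) p

/-- A trail is d-connecting given `L`: every collider is in `L` or has a
descendant in `L`, and every non-collider (internal node) is outside `L`. -/
def DConnecting (E : V → V → Prop) (L : Set V) (p : List V) : Prop :=
  ∀ n a v b, p[n]? = some a → p[n + 1]? = some v →
    p[n + 2]? = some b →
    ((E a v ∧ E b v) → ∃ w ∈ L, Relation.ReflTransGen E v w) ∧
    (¬ (E a v ∧ E b v) → v ∉ L)

/-- d-separation: no d-connecting trail exists. -/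
def DSep (E : V → V → Prop) (L : Set V) (i j : V) : Prop :=
  ¬ ∃ p, IsTrail E i j p ∧ DConnecting E L p

/-- The Cassiopeia graph 1→2←3→4←5 on vertices `Fin 5` (0-indexed). -/
def cassiopeiaE : Fin 5 → Fin 5 → Prop := fun a b =>
  (a = 0 ∧ b = 1) ∨ (a = 2 ∧ b = 1) ∨ (a = 2 ∧ b = 3) ∨ (a = 4 ∧ b = 3)

/-!
Vertex 1 has 2 as its only neighbour, and 2 is a sink, so every trail from 1 to 5 starts
1 → 2 ← 3 with a collider at 2 whose only descendant is 2 itself; given {4} it is blocked there.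
Symmetrically, every trail from 5 is blocked at the collider 4 given {2}. Given {2, 4}, however,
both colliders of the trail 1 → 2 ← 3 → 4 ← 5 are conditioned on and its non-collider 3 is not.
-/

section DSeparation

variable {E : V → V → Prop} {L : Set V}

theorem IsTrail.reverse {i j : V} {p : List V} (h : IsTrail E i j p) :
    IsTrail E j i p.reverse := by
  obtain ⟨hhead, hlast, hchain⟩ := h
  refine ⟨by simpa using hlast, by simpa using hhead, List.isChain_reverse.mpr ?_⟩
  exact hchain.imp fun _ _ hab => hab.symm

theorem DConnecting.reverse {p : List V} (h : DConnecting E L p) :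
    DConnecting E L p.reverse := by
  intro n a v b ha hv hb
  have hlen : n + 2 < p.length := by
    simpa using (List.getElem?_eq_some_iff.mp hb).1
  have hb' : p[p.length - 1 - (n + 2)]? = some b := by
    rwa [← List.getElem?_reverse (by simpa using hlen)]
  have hv' : p[p.length - 1 - (n + 2) + 1]? = some v := by
    rwa [show p.length - 1 - (n + 2) + 1 = p.length - 1 - (n + 1) by omega,
      ← List.getElem?_reverse (by omega)]
  have ha' : p[p.length - 1 - (n + 2) + 2]? = some a := by
    rwa [show p.length - 1 - (n + 2) + 2 = p.length - 1 - n by omega,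
      ← List.getElem?_reverse (by omega)]
  obtain ⟨hcollider, hnoncollider⟩ := h _ _ _ _ hb' hv' ha'
  exact ⟨fun hc => hcollider hc.symm, fun hc => hnoncollider fun hc' => hc hc'.symm⟩

theorem DSep.symm {i j : V} (h : DSep E L i j) : DSep E L j i :=
  fun ⟨p, ht, hd⟩ => h ⟨p.reverse, ht.reverse, hd.reverse⟩

theorem DSep.of_unique_neighbor_sink {s t m : V} (hnbr : ∀ x, E s x ∨ E x s → x = m)
    (hsink : ∀ x, ¬ E m x) (hmL : m ∉ L) (hst : s ≠ t) (hmt : m ≠ t) : DSep E L s t := by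
  rintro ⟨p, ⟨hhead, hlast, hchain⟩, hd⟩
  match p, hhead with
  | [_], rfl => exact hst (by simpa using hlast)
  | _ :: b :: r, rfl =>
    obtain ⟨hsb, hchain⟩ := List.isChain_cons_cons.mp hchain
    obtain rfl := hnbr b hsb
    match r with
    | [] => exact hmt (by simpa using hlast)
    | c :: _ =>
      have hcm := (List.isChain_cons_cons.mp hchain).1
      obtain ⟨w, hwL, hmw⟩ := (hd 0 _ _ c rfl rfl rfl).1
        ⟨hsb.resolve_right (hsink s), hcm.resolve_left (hsink c)⟩
      obtain rfl := hmw.cases_head.resolve_right fun ⟨x, hmx, _⟩ => hsink x hmx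
      exact hmL hwL

end DSeparation

/-- d-separation fails amalgamation on the Cassiopeia graph:
`1 ⊥ 5 | {2}` and `1 ⊥ 5 | {4}` hold, but `1 ⊥ 5 | {2,4}` fails
(vertices 1,…,5 are `0,…,4 : Fin 5`). -/
theorem stmt13 :
    DSep cassiopeiaE ({1} : Set (Fin 5)) 0 4 ∧
    DSep cassiopeiaE ({3} : Set (Fin 5)) 0 4 ∧
    ¬ DSep cassiopeiaE ({1, 3} : Set (Fin 5)) 0 4 := by
  have nbr0 : ∀ x, cassiopeiaE 0 x ∨ cassiopeiaE x 0 → x = 1 := by unfold cassiopeiaE; decide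
  have nbr4 : ∀ x, cassiopeiaE 4 x ∨ cassiopeiaE x 4 → x = 3 := by unfold cassiopeiaE; decide
  have sink1 : ∀ x, ¬ cassiopeiaE 1 x := by unfold cassiopeiaE; decide
  have sink3 : ∀ x, ¬ cassiopeiaE 3 x := by unfold cassiopeiaE; decide
  refine ⟨(DSep.of_unique_neighbor_sink nbr4 sink3 (by simp) (by decide) (by decide)).symm,
    DSep.of_unique_neighbor_sink nbr0 sink1 (by simp) (by decide) (by decide), ?_⟩
  have trail : IsTrail cassiopeiaE 0 4 [0, 1, 2, 3, 4] :=
    ⟨rfl, rfl, show List.IsChain _ _ by simp [cassiopeiaE]⟩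
  have dConnecting : DConnecting cassiopeiaE {1, 3} [0, 1, 2, 3, 4] := by
    intro n a v b ha hv hb
    match n with
    | 0 | 1 | 2 =>
      simp only [List.getElem?_cons_succ, List.getElem?_cons_zero, Option.some_inj] at ha hv hb
      subst ha hv hb
      refine ⟨fun _ => ⟨_, ?_, .refl⟩, fun _ => ?_⟩ <;> simp_all [cassiopeiaE]
    | _ + 3 => simp at hb
  exact fun h => h ⟨_, trail, dConnecting⟩
end

section
/- In the diamond DAG with vertices {1,2,3,4} and edges 1→2, 1→3, 2→4, 3→4, with generic weights satisfying c₁₂ + c₂₄ > c₁₃ + c₃₄, the C*-separation statements among singletons are exactly: 2 ⊥ 3 | 1, 1 ⊥ 4 | {2,3}, and 1 ⊥ 4 | 2. In particular 1 is not C*-separated from 4 given {3}. -/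
/-!  Common definitions: weighted DAGs, paths, critical paths,
critical DAGs and C*-separation, following Boege–Ferry–Hollering–Nowell,
"Polyhedral aspects of maxoids". -/

variable {V : Type*}

/-- The diamond DAG 1→2, 1→3, 2→4, 3→4 on vertices `Fin 4` (0-indexed). -/
def diamondE : Fin 4 → Fin 4 → Prop := fun a b =>
  (a = 0 ∧ b = 1) ∨ (a = 0 ∧ b = 2) ∨ (a = 1 ∧ b = 3) ∨ (a = 2 ∧ b = 3)

/-! With `c₁₂ + c₂₄ > c₁₃ + c₃₄`, any two vertices joined by a path in the diamond have a
unique critical path, and the only critical path with an internal vertex is `1 → 2 → 4`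
(`[0, 1, 3]` in `Fin 4`). So `D*(C,L)` consists of the one-vertex loops, the edges of the
diamond, and the edge `1 → 4` exactly when `2 ∉ L`. The separation statements are then a
finite check over the sixteen conditioning sets `L`. -/

section PathWeight

variable {V : Type*} (c : V → V → ℝ)

@[simp]
theorem pathWeight_singleton (a : V) : pathWeight c [a] = 0 := by
  simp [pathWeight]

@[simp]
theorem pathWeight_cons_cons (a b : V) (l : List V) :
    pathWeight c (a :: b :: l) = c a b + pathWeight c (b :: l) := by
  simp [pathWeight]

end PathWeight

instance : DecidableRel diamondE := fun a b => by unfold diamondE; infer_instance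

theorem diamondE_irrefl (a : Fin 4) : ¬ diamondE a a := by
  revert a; decide

theorem not_diamondE_zero_three : ¬ diamondE 0 3 := by
  decide

theorem diamond_isPath_iff (i j : Fin 4) (p : List (Fin 4)) :
    IsPath diamondE i j p ↔
      p = [i] ∧ i = j ∨ p = [i, j] ∧ diamondE i j ∨
        i = 0 ∧ j = 3 ∧ (p = [0, 1, 3] ∨ p = [0, 2, 3]) := by
  unfold IsPath List.Chain'
  rcases p with _ | ⟨a, _ | ⟨b, _ | ⟨d, _ | ⟨e, rest⟩⟩⟩⟩
  · simp
  · revert i j a; decide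
  · revert i j a b; decide
  · revert i j a b d; decide
  · have no_chain_of_length_four : ∀ a b d e : Fin 4,
        ¬ (diamondE a b ∧ diamondE b d ∧ diamondE d e) := by decide
    refine iff_of_false ?_ (by simp)
    rintro ⟨-, -, hchain⟩
    simp only [List.isChain_cons_cons] at hchain
    exact no_chain_of_length_four a b d e ⟨hchain.1, hchain.2.1, hchain.2.2.1⟩

theorem diamond_isCritical_iff {c : Fin 4 → Fin 4 → ℝ} (h : c 0 2 + c 2 3 < c 0 1 + c 1 3)
    (i j : Fin 4) (p : List (Fin 4)) :
    IsCritical diamondE c i j p ↔ IsPath diamondE i j p ∧ p ≠ [0, 2, 3] := by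
  constructor
  · rintro ⟨hp, hmax⟩
    refine ⟨hp, ?_⟩
    rintro rfl
    obtain ⟨rfl, rfl⟩ : i = 0 ∧ j = 3 :=
      ⟨(Option.some.inj hp.1).symm, (Option.some.inj hp.2.1).symm⟩
    have := hmax [0, 1, 3] ((diamond_isPath_iff _ _ _).2 (by simp))
    simp only [pathWeight_cons_cons, pathWeight_singleton] at this
    linarith
  · rintro ⟨hp, hne⟩
    refine ⟨hp, fun q hq => ?_⟩
    rw [diamond_isPath_iff] at hp hq
    rcases hp with ⟨rfl, rfl⟩ | ⟨rfl, hij⟩ | ⟨rfl, rfl, rfl | rfl⟩ <;>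
    rcases hq with ⟨rfl, h'⟩ | ⟨rfl, h'⟩ | ⟨h1, h2, rfl | rfl⟩ <;>
    simp_all [diamondE_irrefl, not_diamondE_zero_three]
    linarith

def diamondCritDAG (L : Set (Fin 4)) (i j : Fin 4) : Prop :=
  i = j ∨ diamondE i j ∨ i = 0 ∧ j = 3 ∧ 1 ∉ L

theorem diamond_critEdge_eq {c : Fin 4 → Fin 4 → ℝ} (h : c 0 2 + c 2 3 < c 0 1 + c 1 3) :
    critEdge diamondE c = diamondCritDAG := by
  ext L i j
  simp only [critEdge, diamond_isCritical_iff h, diamond_isPath_iff, or_imp, forall_and,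
    and_imp, forall_eq, internalVerts, diamondCritDAG]
  fin_cases i <;> fin_cases j <;> simp [diamondE]

set_option synthInstance.maxSize 10000 in
/-- in the diamond DAG with `c₁₂ + c₂₄ > c₁₃ + c₃₄`, the
C*-separations among singletons are exactly `2 ⊥ 3 | 1`, `1 ⊥ 4 | {2,3}` and
`1 ⊥ 4 | 2`; in particular `1` is not C*-separated from `4` given `{3}`
(vertices 1,2,3,4 are `0,1,2,3 : Fin 4`). -/
theorem stmt14 (c : Fin 4 → Fin 4 → ℝ)
    (h : c 0 2 + c 2 3 < c 0 1 + c 1 3) :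
    (∀ (i j : Fin 4) (L : Set (Fin 4)), i ≠ j → i ∉ L → j ∉ L →
      (CSep diamondE c L i j ↔
        ((({i, j} : Set (Fin 4)) = {1, 2} ∧ L = {0}) ∨
         (({i, j} : Set (Fin 4)) = {0, 3} ∧ L = {1, 2}) ∨
         (({i, j} : Set (Fin 4)) = {0, 3} ∧ L = {1})))) ∧
    ¬ CSep diamondE c ({2} : Set (Fin 4)) 0 3 := by
  refine ⟨fun i j L => ?_, fun hsep => hsep (Or.inl ?_)⟩
  · obtain ⟨s, rfl⟩ := L.toFinite.exists_finset_coe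
    simp only [CSep, starConn, diamond_critEdge_eq h, diamondCritDAG, Finset.mem_coe,
      ← Finset.coe_singleton, ← Finset.coe_insert, Finset.coe_inj]
    revert i j s
    decide
  · rw [diamond_critEdge_eq h]
    exact Or.inr (Or.inr ⟨rfl, rfl, by simp⟩)
end

section
/- Let (G,C) be a weighted DAG whose C*-separation relation violates Weak Transitivity in the sense that there exist distinct i,j,k and L with i ⊥ j | L and i ⊥ j | {k}∪L but neither i ⊥ k | L nor j ⊥ k | L. Concretely, in the diamond DAG 1→2, 1→3, 2→4, 3→4 with weights satisfying c₁₃ + c₃₄ > c₁₂ + c₂₄: the statements 1 ⊥ 4 | {3} and 1 ⊥ 4 | {2,3} hold, but neither 1 ⊥ 2 | {3} nor 2 ⊥ 4 | {3} holds. -/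
/-!  Common definitions: weighted DAGs, paths, critical paths,
critical DAGs and C*-separation, following Boege–Ferry–Hollering–Nowell,
"Polyhedral aspects of maxoids". -/

variable {V : Type*}

/-! In the diamond with `c₁₃ + c₃₄ > c₁₂ + c₂₄` the unique critical `1`–`4` path is `1 → 3 → 4`,
so as soon as `3` is conditioned on, the edge `1 → 4` disappears from `D*(C, L)`. Every other
connecting shape between `1` and `4` needs either an edge of `D*` out of the sink `4`, or a
non-collider outside `L` with an edge into `1` or into a conditioned vertex; in the diamond that
non-collider can only be `1`, and the shape needs the missing edge `1 → 4` again. On the other hand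
`1 → 2` and `2 → 4` are the only paths between their endpoints, so they are edges of `D*(C, L)`
for every `L`. -/

section CriticalDAG

variable {E : V → V → Prop} {c : V → V → ℝ} {L : Set V} {i j : V}

theorem critEdge_of_forall_isPath_eq (hij : E i j) (h : ∀ p, IsPath E i j p → p = [i, j]) :
    critEdge E c L i j := by
  refine ⟨⟨[i, j], rfl, rfl, List.isChain_pair.mpr hij⟩, fun p hp v hv => ?_⟩
  rw [h p hp.1] at hv
  simp [internalVerts] at hv

theorem not_critEdge_of_isCritical {p : List V} {v : V} (hp : IsCritical E c i j p)
    (hv : v ∈ internalVerts p) (hvL : v ∈ L) : ¬ critEdge E c L i j :=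
  fun hD => hD.2 p hp v hv hvL

theorem not_cSep_of_critEdge (h : critEdge E c L i j) : ¬ CSep E c L i j :=
  fun hsep => hsep (Or.inl h)

end CriticalDAG

section Diamond

variable {c : Fin 4 → Fin 4 → ℝ} {L : Set (Fin 4)} {u v : Fin 4} {p : List (Fin 4)}

instance inst_s18 : DecidableRel diamondE := fun a b => by unfold diamondE; infer_instance

def diamondChains : List (List (Fin 4)) :=
  [[], [0], [1], [2], [3], [0, 1], [0, 2], [1, 3], [2, 3], [0, 1, 3], [0, 2, 3]]

theorem mem_diamondChains_of_isChain : ∀ {p : List (Fin 4)}, p.IsChain diamondE →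
    p ∈ diamondChains
  | [], _ => by decide
  | a :: l, h => by
    rw [List.isChain_cons] at h
    have cons_mem : ∀ a, ∀ l ∈ diamondChains, (∀ b ∈ l.head?, diamondE a b) →
        a :: l ∈ diamondChains := by
      decide
    exact cons_mem a l (mem_diamondChains_of_isChain h.2) h.1

theorem diamond_reach (hp : IsPath diamondE u v p) : u = v ∨ u = 0 ∨ v = 3 := by
  obtain ⟨hu, hv, hchain⟩ := hp
  have key : ∀ q ∈ diamondChains, ∀ u v : Fin 4,
      q.head? = some u → q.getLast? = some v → u = v ∨ u = 0 ∨ v = 3 := by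
    decide
  exact key p (mem_diamondChains_of_isChain hchain) u v hu hv

theorem diamond_isPath_zero_one (hp : IsPath diamondE 0 1 p) : p = [0, 1] := by
  obtain ⟨hu, hv, hchain⟩ := hp
  have key : ∀ q ∈ diamondChains, q.head? = some 0 → q.getLast? = some 1 → q = [0, 1] := by
    decide
  exact key p (mem_diamondChains_of_isChain hchain) hu hv

theorem diamond_isPath_one_three (hp : IsPath diamondE 1 3 p) : p = [1, 3] := by
  obtain ⟨hu, hv, hchain⟩ := hp
  have key : ∀ q ∈ diamondChains, q.head? = some 1 → q.getLast? = some 3 → q = [1, 3] := by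
    decide
  exact key p (mem_diamondChains_of_isChain hchain) hu hv

theorem diamond_isPath_zero_three (hp : IsPath diamondE 0 3 p) :
    p = [0, 1, 3] ∨ p = [0, 2, 3] := by
  obtain ⟨hu, hv, hchain⟩ := hp
  have key : ∀ q ∈ diamondChains, q.head? = some 0 → q.getLast? = some 3 →
      q = [0, 1, 3] ∨ q = [0, 2, 3] := by
    decide
  exact key p (mem_diamondChains_of_isChain hchain) hu hv

theorem diamond_isCritical_zero_two_three (h : c 0 1 + c 1 3 < c 0 2 + c 2 3) :
    IsCritical diamondE c 0 3 [0, 2, 3] := by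
  refine ⟨⟨rfl, rfl, (by decide : [0, 2, 3].IsChain diamondE)⟩, fun q hq => ?_⟩
  rcases diamond_isPath_zero_three hq with rfl | rfl
  · simpa [pathWeight] using h.le
  · exact le_rfl

theorem diamond_critEdge_zero_one : critEdge diamondE c L 0 1 :=
  critEdge_of_forall_isPath_eq (by decide) fun _ => diamond_isPath_zero_one

theorem diamond_critEdge_one_three : critEdge diamondE c L 1 3 :=
  critEdge_of_forall_isPath_eq (by decide) fun _ => diamond_isPath_one_three

theorem diamond_cSep_zero_three (h : c 0 1 + c 1 3 < c 0 2 + c 2 3) (h2 : 2 ∈ L)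
    (h3 : 3 ∉ L) : CSep diamondE c L 0 3 := by
  have h03 : ¬ critEdge diamondE c L 0 3 :=
    not_critEdge_of_isCritical (diamond_isCritical_zero_two_three h) (by simp [internalVerts]) h2
  have reach {u v : Fin 4} (hD : critEdge diamondE c L u v) : u = v ∨ u = 0 ∨ v = 3 :=
    diamond_reach hD.1.choose_spec
  have parent_zero {p : Fin 4} (hD : critEdge diamondE c L p 0) : p = 0 := by
    have := reach hD
    omega
  have child_three {l : Fin 4} (hD : critEdge diamondE c L 3 l) : l = 3 := by
    have := reach hD
    omega
  have parent_in_L {p l : Fin 4} (hp : p ∉ L) (hl : l ∈ L) (hD : critEdge diamondE c L p l) :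
      p = 0 := by
    rcases reach hD with rfl | rfl | rfl
    exacts [absurd hl hp, rfl, absurd hl h3]
  rintro (hD | hD | ⟨p, -, hp0, hp3⟩ | ⟨l, hl, -, h3l⟩ | ⟨p, l, -, hl, -, -, h3l⟩ |
    ⟨p, l, hp, hl, hp3, hpl, -⟩ | ⟨p, q, l, -, hq, hl, -, -, hql, hq3⟩)
  · exact h03 hD
  · exact absurd (child_three hD) (by decide)
  · exact h03 (parent_zero hp0 ▸ hp3)
  · exact h3 (child_three h3l ▸ hl)
  · exact h3 (child_three h3l ▸ hl)
  · exact h03 (parent_in_L hp hl hpl ▸ hp3)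
  · exact h03 (parent_in_L hq hl hql ▸ hq3)

end Diamond

/-- the diamond with `c₁₃ + c₃₄ > c₁₂ + c₂₄` violates Weak
Transitivity: `1 ⊥ 4 | {3}` and `1 ⊥ 4 | {2,3}` hold, but neither
`1 ⊥ 2 | {3}` nor `2 ⊥ 4 | {3}` holds (vertices 1,2,3,4 are `0,1,2,3`). -/
theorem stmt18 (c : Fin 4 → Fin 4 → ℝ)
    (h : c 0 1 + c 1 3 < c 0 2 + c 2 3) :
    CSep diamondE c ({2} : Set (Fin 4)) 0 3 ∧
    CSep diamondE c ({1, 2} : Set (Fin 4)) 0 3 ∧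
    ¬ CSep diamondE c ({2} : Set (Fin 4)) 0 1 ∧
    ¬ CSep diamondE c ({2} : Set (Fin 4)) 1 3 :=
  ⟨diamond_cSep_zero_three h (by simp) (by simp),
    diamond_cSep_zero_three h (by simp) (by simp),
    not_cSep_of_critEdge diamond_critEdge_zero_one,
    not_cSep_of_critEdge diamond_critEdge_one_three⟩
end
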